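/- Let ρ be a real number with 2/3 < ρ < 1. Then there exist constants C > 0 and ε₀ ∈ (0, 1) such that for every ε ∈ (0, ε₀), every x ∈ ℝ², every continuous O : ℝ → ℝ², and every t ∈ (0, ε^ρ]: (t/ε²) · ∫₀ᵗ ( ∫_{B(O(s), ε^ρ)} exp(−‖x−y‖²/(t−s)) dy ) / (t−s) ds ≤ C · ε^{3ρ−2} · log(1/ε), where B(z, r) denotes the open Euclidean ball of center z and radius r in ℝ² and the integrals are Lebesgue integrals. -/

import Mathlib

/-!
At time lag `τ = t - s` the heat-kernel mass of a ball of radius `r` in the plane is at most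
`π · min (r², τ)`: the area of the ball, or the full Gaussian integral `π τ`. Dividing by `τ` and
integrating over `s ∈ (0, t)` gives `π r²` from lags `τ ≤ r²` and `π r² log (t / r²)` from the
rest. With `r = ε^ρ` and `t ≤ r`, we have `ε ≤ ε^ρ` (as `ρ ≤ 1`), so `t / r² ≤ 1 / ε` and the time
integral is at most `π r² (1 + log (1 / ε))`, and `ε < e⁻¹` makes `log (1 / ε) ≥ 1` absorb the `1`.
The prefactor `t / ε² ≤ ε^ρ / ε²` then produces `ε^(3ρ - 2)`.
-/

open MeasureTheory Real Set

section Gaussian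

variable {V : Type*} [NormedAddCommGroup V] [InnerProductSpace ℝ V] [FiniteDimensional ℝ V]
  [MeasurableSpace V] [BorelSpace V]

theorem integral_exp_neg_sq_norm_sub_div {τ : ℝ} (hτ : 0 < τ) (x : V) :
    ∫ y, rexp (-‖x - y‖ ^ 2 / τ) = (π * τ) ^ (Module.finrank ℝ V / 2 : ℝ) := by
  have hexponent : ∀ y : V, -‖x - y‖ ^ 2 / τ = -τ⁻¹ * ‖x - y‖ ^ 2 := fun y => by ring
  simp_rw [hexponent]
  rw [integral_sub_left_eq_self (fun v : V => rexp (-τ⁻¹ * ‖v‖ ^ 2)) volume x,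
    GaussianFourier.integral_rexp_neg_mul_sq_norm (inv_pos.mpr hτ), div_inv_eq_mul]

theorem setIntegral_exp_neg_sq_norm_sub_div_le {τ : ℝ} (hτ : 0 < τ) (x : V) (s : Set V) :
    ∫ y in s, rexp (-‖x - y‖ ^ 2 / τ) ≤ (π * τ) ^ (Module.finrank ℝ V / 2 : ℝ) := by
  have hint : Integrable fun y : V => rexp (-‖x - y‖ ^ 2 / τ) :=
    .of_integral_ne_zero (by rw [integral_exp_neg_sq_norm_sub_div hτ x]; positivity)
  rw [← integral_exp_neg_sq_norm_sub_div hτ x]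
  exact setIntegral_le_integral hint (.of_forall fun _ => (exp_pos _).le)

end Gaussian

theorem setIntegral_ball_exp_neg_sq_norm_sub_div_le (x z : EuclideanSpace ℝ (Fin 2)) {r τ : ℝ}
    (hr : 0 ≤ r) (hτ : 0 < τ) :
    ∫ y in Metric.ball z r, rexp (-‖x - y‖ ^ 2 / τ) ≤ π * min (r ^ 2) τ := by
  rw [mul_min_of_nonneg _ _ pi_pos.le]
  refine le_min ?_ ?_
  · have hle_one : ∀ y ∈ Metric.ball z r, ‖rexp (-‖x - y‖ ^ 2 / τ)‖ ≤ 1 := fun y _ => by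
      rw [norm_of_nonneg (exp_pos _).le, exp_le_one_iff]
      exact div_nonpos_of_nonpos_of_nonneg (by simp) hτ.le
    calc _ ≤ 1 * volume.real (Metric.ball z r) := (le_abs_self _).trans
          (norm_setIntegral_le_of_norm_le_const measure_ball_lt_top hle_one)
      _ = π * r ^ 2 := by simp [measureReal_def, hr, pi_nonneg, mul_comm]
  · simpa [finrank_euclideanSpace_fin] using setIntegral_exp_neg_sq_norm_sub_div_le hτ x _

section MinDiv

variable {a : ℝ}

theorem abs_min_div_self_le_one (ha : 0 ≤ a) (u : ℝ) : |min a u / u| ≤ 1 := by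
  rw [abs_div]
  refine div_le_one_of_le₀ ?_ (abs_nonneg u)
  rcases le_total a u with h | h
  · rw [min_eq_left h, abs_of_nonneg ha, abs_of_nonneg (ha.trans h)]; exact h
  · rw [min_eq_right h]

theorem intervalIntegrable_min_div_self (ha : 0 ≤ a) (c d : ℝ) :
    IntervalIntegrable (fun u => min a u / u) volume c d :=
  (intervalIntegrable_const (c := (1 : ℝ))).mono_fun'
    ((measurable_const.min measurable_id).div measurable_id).aestronglyMeasurable
    (ae_of_all _ fun u => (norm_eq_abs _).trans_le (abs_min_div_self_le_one ha u))

theorem abs_intervalIntegral_min_div_self_le (ha : 0 ≤ a) (c d : ℝ) :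
    |∫ u in c..d, min a u / u| ≤ |d - c| := by
  simpa using intervalIntegral.norm_integral_le_of_norm_le_const (a := c) (b := d)
    fun u _ => (norm_eq_abs (min a u / u)).trans_le (abs_min_div_self_le_one ha u)

theorem intervalIntegral_min_div_self_le {b t : ℝ} (ha : 0 < a) (hb : 1 ≤ b) (ht : 0 ≤ t)
    (htab : t ≤ a * b) :
    ∫ u in 0..t, min a u / u ≤ a * (1 + log b) := by
  have hlog : 0 ≤ log b := log_nonneg hb
  rcases le_total t a with hta | hat
  · calc _ ≤ t := (le_abs_self _).trans <| by
          simpa [abs_of_nonneg ht] using abs_intervalIntegral_min_div_self_le ha.le 0 t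
      _ ≤ a * (1 + log b) := by nlinarith
  have hhead : ∫ u in 0..a, min a u / u ≤ a := (le_abs_self _).trans <| by
    simpa [abs_of_pos ha] using abs_intervalIntegral_min_div_self_le ha.le 0 a
  have htail : ∫ u in a..t, min a u / u = a * log (t / a) := by
    rw [intervalIntegral.integral_congr (g := fun u => a * u⁻¹),
      intervalIntegral.integral_const_mul, integral_inv_of_pos ha (ha.trans_le hat)]
    intro u hu
    rw [uIcc_of_le hat] at hu
    simp only [min_eq_left hu.1, div_eq_mul_inv]
  have hlog_le : log (t / a) ≤ log b :=
    log_le_log (div_pos (ha.trans_le hat) ha) (by rw [div_le_iff₀ ha]; linarith)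
  rw [← intervalIntegral.integral_add_adjacent_intervals
    (intervalIntegrable_min_div_self ha.le 0 a) (intervalIntegrable_min_div_self ha.le a t), htail]
  nlinarith

theorem intervalIntegral_div_sub_le_of_le_min {F : ℝ → ℝ} {c t : ℝ} (ha : 0 ≤ a) (ht : 0 ≤ t)
    (hF0 : ∀ s ∈ Ioo 0 t, 0 ≤ F s) (hF : ∀ s ∈ Ioo 0 t, F s ≤ c * min a (t - s)) :
    ∫ s in 0..t, F s / (t - s) ≤ c * ∫ u in 0..t, min a u / u := by
  have hreflect := intervalIntegral.integral_comp_sub_left (fun u => c * (min a u / u)) t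
    (a := 0) (b := t)
  rw [sub_self, sub_zero] at hreflect
  rw [← intervalIntegral.integral_const_mul, ← hreflect, intervalIntegral.integral_of_le ht,
    intervalIntegral.integral_of_le ht, integral_Ioc_eq_integral_Ioo, integral_Ioc_eq_integral_Ioo]
  have hint : IntervalIntegrable (fun s => c * (min a (t - s) / (t - s))) volume 0 t := by
    simpa using (((intervalIntegrable_min_div_self ha 0 t).comp_sub_left t).const_mul c).symm
  refine integral_mono_of_nonneg ?_ (hint.1.mono_set Ioo_subset_Ioc_self) ?_ <;>
    refine (ae_restrict_iff' measurableSet_Ioo).mpr (.of_forall fun s hs => ?_)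
  · exact div_nonneg (hF0 s hs) (sub_pos.mpr hs.2).le
  · dsimp only
    rw [← mul_div_assoc]
    exact div_le_div_of_nonneg_right (hF s hs) (sub_pos.mpr hs.2).le

end MinDiv

theorem stmt_10_general (ρ : ℝ) (hρ1 : ρ < 1) :
    ∃ C > (0:ℝ), ∃ ε₀ ∈ Set.Ioo (0:ℝ) 1, ∀ ε ∈ Set.Ioo (0:ℝ) ε₀,
      ∀ x : EuclideanSpace ℝ (Fin 2),
      ∀ O : ℝ → EuclideanSpace ℝ (Fin 2), Continuous O →
      ∀ t ∈ Set.Ioc (0:ℝ) (ε ^ ρ),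
        (t / ε ^ 2) *
          (∫ s in (0:ℝ)..t,
            (∫ y in Metric.ball (O s) (ε ^ ρ),
              Real.exp (-‖x - y‖ ^ 2 / (t - s))) / (t - s))
          ≤ C * ε ^ (3 * ρ - 2) * Real.log (1 / ε) := by
  refine ⟨2 * π, by positivity, rexp (-1), ⟨exp_pos _, exp_lt_one_iff.mpr (by norm_num)⟩, ?_⟩
  rintro ε ⟨hε0, hεe⟩ x O - t ⟨ht0, htr⟩
  have hε1 : ε < 1 := hεe.trans (exp_lt_one_iff.mpr (by norm_num))
  have hL : 1 ≤ log (1 / ε) := by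
    rw [one_div, log_inv, le_neg, ← log_exp (-1)]
    exact log_le_log hε0 hεe.le
  set r := ε ^ ρ
  set L := log (1 / ε)
  have hr0 : 0 < r := rpow_pos_of_pos hε0 ρ
  have hεr : ε ≤ r := by simpa using rpow_le_rpow_of_exponent_ge hε0 hε1.le hρ1.le
  have htr_le : t ≤ r ^ 2 * (1 / ε) := by
    rw [mul_one_div, le_div_iff₀ hε0]
    nlinarith
  have htime :
      ∫ s in (0:ℝ)..t, (∫ y in Metric.ball (O s) r, rexp (-‖x - y‖ ^ 2 / (t - s))) / (t - s)
        ≤ π * (r ^ 2 * (1 + L)) := by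
    refine (intervalIntegral_div_sub_le_of_le_min (sq_nonneg r) ht0.le
      (fun s _ => setIntegral_nonneg measurableSet_ball fun y _ => (exp_pos _).le)
      fun s hs => setIntegral_ball_exp_neg_sq_norm_sub_div_le x (O s) hr0.le
        (sub_pos.mpr hs.2)).trans ?_
    exact mul_le_mul_of_nonneg_left (intervalIntegral_min_div_self_le (by positivity)
      (one_le_one_div hε0 hε1.le) ht0.le htr_le) pi_pos.le
  have hpow : r * r ^ 2 / ε ^ 2 = ε ^ (3 * ρ - 2) := by
    rw [rpow_sub hε0, rpow_two, mul_comm 3 ρ, show (3 : ℝ) = (3 : ℕ) by norm_num,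
      rpow_mul_natCast hε0.le]
    ring
  calc (t / ε ^ 2) * _ ≤ (t / ε ^ 2) * (π * (r ^ 2 * (1 + L))) := by gcongr
    _ ≤ (r / ε ^ 2) * (π * (r ^ 2 * (2 * L))) := by gcongr; linarith
    _ = 2 * π * ε ^ (3 * ρ - 2) * L := by rw [← hpow]; ring

/-- Short-time estimate near the nodes: for `2/3 < ρ < 1` and `t ∈ (0, ε^ρ]`,
the time-weighted Duhamel contribution of the balls `B_{ε^ρ}(O(s))` is at most
`C ε^{3ρ-2} log(1/ε)`. -/
theorem stmt_10 (ρ : ℝ) (hρ : 2 / 3 < ρ) (hρ1 : ρ < 1) :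
    ∃ C > (0:ℝ), ∃ ε₀ ∈ Set.Ioo (0:ℝ) 1, ∀ ε ∈ Set.Ioo (0:ℝ) ε₀,
      ∀ x : EuclideanSpace ℝ (Fin 2),
      ∀ O : ℝ → EuclideanSpace ℝ (Fin 2), Continuous O →
      ∀ t ∈ Set.Ioc (0:ℝ) (ε ^ ρ),
        (t / ε ^ 2) *
          (∫ s in (0:ℝ)..t,
            (∫ y in Metric.ball (O s) (ε ^ ρ),
              Real.exp (-‖x - y‖ ^ 2 / (t - s))) / (t - s))
          ≤ C * ε ^ (3 * ρ - 2) * Real.log (1 / ε) :=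
  stmt_10_general ρ hρ1
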